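/- Given two paths P and P' in a graph with the same endpoints u and v, the path P may be transformed into P' by a finite sequence of reroutings, where a rerouting replaces a subpath of the current path between two of its vertices x and y by an internally disjoint x-y path. -/

import Mathlib

/-! Common definitions: multigraphs, walks, biased graphs, frame matroids. -/

universe u v

structure Multigraph (V : Type u) (E : Type v) where
  inc : E → Sym2 V

namespace Multigraph

variable {V : Type u} {E : Type v}

/-- An edge is a loop if its two endpoints coincide. -/
def IsLoop (G : Multigraph V E) (e : E) : Prop := (G.inc e).IsDiag

/-- The set of links (non-loop edges) incident to a vertex. -/
def delta (G : Multigraph V E) (x : V) : Set E := {e | x ∈ G.inc e ∧ ¬ G.IsLoop e}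

/-- The set of all edges (including loops) incident to a vertex. -/
def deltaPlus (G : Multigraph V E) (x : V) : Set E := {e | x ∈ G.inc e}

/-- The set of vertices incident with an edge of `X`. -/
def VSet (G : Multigraph V E) (X : Set E) : Set V := {x | ∃ e ∈ X, x ∈ G.inc e}

/-- Walks in a multigraph. -/
inductive Walk (G : Multigraph V E) : V → V → Type (max u v) where
  | nil (x : V) : Walk G x x
  | cons {x y z : V} (e : E) (h : G.inc e = s(x, y)) (t : Walk G y z) : Walk G x z

namespace Walk

variable {G : Multigraph V E}

/-- The list of edges of a walk. -/
def edgeList : {x y : V} → G.Walk x y → List E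
  | _, _, .nil _ => []
  | _, _, .cons e _ t => e :: t.edgeList

/-- The list of vertices of a walk (both endpoints included). -/
def vertList : {x y : V} → G.Walk x y → List V
  | _, _, .nil a => [a]
  | a, _, .cons _ _ t => a :: t.vertList

/-- The edge set of a walk. -/
def edgeSet {x y : V} (w : G.Walk x y) : Set E := {e | e ∈ w.edgeList}

/-- A walk is a path if it repeats no vertex. -/
def IsPath {x y : V} (w : G.Walk x y) : Prop := w.vertList.Nodup

/-- A closed walk is a cycle if it is nonempty, repeats no edge and repeats
no vertex except for its starting vertex.  (A loop gives a cycle of length one.) -/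
def IsCycle {x : V} (w : G.Walk x x) : Prop :=
  w.edgeList ≠ [] ∧ w.edgeList.Nodup ∧ w.vertList.dropLast.Nodup

end Walk

/-- `P` is the edge set of a path from `x` to `y`. -/
def IsPathSet (G : Multigraph V E) (x y : V) (P : Set E) : Prop :=
  ∃ w : G.Walk x y, w.IsPath ∧ w.edgeSet = P

/-- `C` is the edge set of a cycle. -/
def IsCycleSet (G : Multigraph V E) (C : Set E) : Prop :=
  ∃ (x : V) (w : G.Walk x x), w.IsCycle ∧ w.edgeSet = C

/-- Two vertices are connected using only edges of `X`. -/
def ConnectedTo (G : Multigraph V E) (X : Set E) (x y : V) : Prop :=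
  ∃ w : G.Walk x y, w.edgeSet ⊆ X

/-- A multigraph is connected if any two vertices are joined by a walk. -/
def ConnectedGraph (G : Multigraph V E) : Prop := ∀ x y : V, Nonempty (G.Walk x y)

/-- The subgraph induced by an edge set `X` is connected. -/
def SubConnected (G : Multigraph V E) (X : Set E) : Prop :=
  ∀ e ∈ X, ∀ f ∈ X, ∃ x y, x ∈ G.inc e ∧ y ∈ G.inc f ∧ G.ConnectedTo X x y

/-- A theta subgraph: two distinct vertices joined by three internally disjoint paths. -/
def IsTheta (G : Multigraph V E) (x y : V) (P₁ P₂ P₃ : Set E) : Prop :=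
  x ≠ y ∧ G.IsPathSet x y P₁ ∧ G.IsPathSet x y P₂ ∧ G.IsPathSet x y P₃ ∧
    Disjoint P₁ P₂ ∧ Disjoint P₂ P₃ ∧ Disjoint P₁ P₃ ∧
    G.VSet P₁ ∩ G.VSet P₂ ⊆ {x, y} ∧ G.VSet P₂ ∩ G.VSet P₃ ⊆ {x, y} ∧
    G.VSet P₁ ∩ G.VSet P₃ ⊆ {x, y}

/-- A proper separation of a multigraph, given as a partition of the edge set:
each side must contain a vertex not met by the other side. -/
def IsProperSep (G : Multigraph V E) (X Y : Set E) : Prop :=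
  X ∪ Y = Set.univ ∧ Disjoint X Y ∧
    (G.VSet X \ G.VSet Y).Nonempty ∧ (G.VSet Y \ G.VSet X).Nonempty

/-- A multigraph is `k`-connected if it is connected and every proper separation
has order at least `k`. -/
def KConnected (G : Multigraph V E) (k : ℕ) : Prop :=
  G.ConnectedGraph ∧ ∀ X Y : Set E, G.IsProperSep X Y → k ≤ (G.VSet X ∩ G.VSet Y).ncard

/-- The connected component of the edge `e` in the subgraph induced by `X`. -/
def edgeComponent (G : Multigraph V E) (X : Set E) (e : E) : Set E :=
  {f | f ∈ X ∧ ∃ x y, x ∈ G.inc e ∧ y ∈ G.inc f ∧ G.ConnectedTo X x y}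

/-- The set of connected components (as edge sets) of the subgraph induced by `X`. -/
def components (G : Multigraph V E) (X : Set E) : Set (Set E) :=
  {D | ∃ e ∈ X, D = G.edgeComponent X e}

/-- One step of rerouting a `u`-`v` path: replace a subpath `R` (with endpoints `x,y`)
of `P` by an `x`-`y` path `Q` that is internally disjoint from `P`. -/
def RerouteStep (G : Multigraph V E) (u v : V) (P P' : Set E) : Prop :=
  G.IsPathSet u v P ∧ G.IsPathSet u v P' ∧
    ∃ x y R Q, G.IsPathSet x y R ∧ G.IsPathSet x y Q ∧ R ⊆ P ∧
      Disjoint Q (P \ R) ∧ G.VSet Q ∩ G.VSet P ⊆ {x, y} ∧ P' = (P \ R) ∪ Q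

end Multigraph

/-- A biased graph: a multigraph together with a collection of balanced cycles
satisfying the theta property. -/
structure BiasedGraph (V : Type u) (E : Type v) extends Multigraph V E where
  Balanced : Set E → Prop
  balanced_isCycle : ∀ C, Balanced C → toMultigraph.IsCycleSet C
  theta_property : ∀ x y P₁ P₂ P₃, toMultigraph.IsTheta x y P₁ P₂ P₃ →
    Balanced (P₁ ∪ P₂) → Balanced (P₂ ∪ P₃) → Balanced (P₁ ∪ P₃)

namespace BiasedGraph

variable {V : Type u} {E : Type v}

/-- A balancing vertex: every unbalanced cycle passes through it. -/
def BalancingVertex (Ω : BiasedGraph V E) (u : V) : Prop :=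
  ∀ C, Ω.toMultigraph.IsCycleSet C → ¬ Ω.Balanced C → ∃ e ∈ C, u ∈ Ω.inc e

/-- `C` is an unbalanced cycle of `Ω`. -/
def IsUnbalancedCycle (Ω : BiasedGraph V E) (C : Set E) : Prop :=
  Ω.toMultigraph.IsCycleSet C ∧ ¬ Ω.Balanced C

/-- Every cycle contained in `X` is balanced. -/
def BalancedSub (Ω : BiasedGraph V E) (X : Set E) : Prop :=
  ∀ C ⊆ X, Ω.toMultigraph.IsCycleSet C → Ω.Balanced C

/-- `e ~ f`: either `e = f` or some balanced cycle contains both. -/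
def LinkRel (Ω : BiasedGraph V E) (e f : E) : Prop :=
  e = f ∨ ∃ C, Ω.toMultigraph.IsCycleSet C ∧ Ω.Balanced C ∧ e ∈ C ∧ f ∈ C

/-- The same relation, with the balanced cycle restricted to lie inside `A`. -/
def LinkRelIn (Ω : BiasedGraph V E) (A : Set E) (e f : E) : Prop :=
  e = f ∨ ∃ C, C ⊆ A ∧ Ω.toMultigraph.IsCycleSet C ∧ Ω.Balanced C ∧ e ∈ C ∧ f ∈ C

/-- `S` is an unbalancing class of `delta u`: a (nonempty) equivalence class of `~`. -/
def IsUnbalancingClass (Ω : BiasedGraph V E) (u : V) (S : Set E) : Prop :=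
  S.Nonempty ∧ S ⊆ Ω.toMultigraph.delta u ∧
    ∀ e ∈ S, ∀ f ∈ Ω.toMultigraph.delta u, (f ∈ S ↔ Ω.LinkRel e f)

/-- `delta u` has exactly three unbalancing classes within the edge set `A`. -/
def HasThreeClassesIn (Ω : BiasedGraph V E) (u : V) (A : Set E) : Prop :=
  ∃ e₁ e₂ e₃, e₁ ∈ Ω.toMultigraph.delta u ∩ A ∧ e₂ ∈ Ω.toMultigraph.delta u ∩ A ∧
    e₃ ∈ Ω.toMultigraph.delta u ∩ A ∧
    ¬ Ω.LinkRelIn A e₁ e₂ ∧ ¬ Ω.LinkRelIn A e₁ e₃ ∧ ¬ Ω.LinkRelIn A e₂ e₃ ∧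
    ∀ f ∈ Ω.toMultigraph.delta u ∩ A,
      Ω.LinkRelIn A f e₁ ∨ Ω.LinkRelIn A f e₂ ∨ Ω.LinkRelIn A f e₃

/-- Tight handcuffs: two unbalanced cycles meeting in exactly one vertex. -/
def IsTightHandcuff (Ω : BiasedGraph V E) (X : Set E) : Prop :=
  ∃ C₁ C₂, Ω.IsUnbalancedCycle C₁ ∧ Ω.IsUnbalancedCycle C₂ ∧ Disjoint C₁ C₂ ∧
    (∃ x, Ω.toMultigraph.VSet C₁ ∩ Ω.toMultigraph.VSet C₂ = {x}) ∧ X = C₁ ∪ C₂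

/-- Loose handcuffs: two vertex-disjoint unbalanced cycles joined by a path meeting
each cycle only in an endpoint. -/
def IsLooseHandcuff (Ω : BiasedGraph V E) (X : Set E) : Prop :=
  ∃ C₁ C₂ P x y, Ω.IsUnbalancedCycle C₁ ∧ Ω.IsUnbalancedCycle C₂ ∧
    Disjoint (Ω.toMultigraph.VSet C₁) (Ω.toMultigraph.VSet C₂) ∧
    Ω.toMultigraph.IsPathSet x y P ∧ Disjoint P (C₁ ∪ C₂) ∧
    Ω.toMultigraph.VSet P ∩ Ω.toMultigraph.VSet C₁ = {x} ∧
    Ω.toMultigraph.VSet P ∩ Ω.toMultigraph.VSet C₂ = {y} ∧ X = C₁ ∪ C₂ ∪ P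

/-- A contrabalanced theta: a theta subgraph all three of whose cycles are unbalanced. -/
def IsContraTheta (Ω : BiasedGraph V E) (X : Set E) : Prop :=
  ∃ x y P₁ P₂ P₃, Ω.toMultigraph.IsTheta x y P₁ P₂ P₃ ∧
    ¬ Ω.Balanced (P₁ ∪ P₂) ∧ ¬ Ω.Balanced (P₂ ∪ P₃) ∧ ¬ Ω.Balanced (P₁ ∪ P₃) ∧
    X = P₁ ∪ P₂ ∪ P₃

/-- The circuits of the frame matroid of a biased graph. -/
def FrameCircuit (Ω : BiasedGraph V E) (X : Set E) : Prop :=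
  (Ω.toMultigraph.IsCycleSet X ∧ Ω.Balanced X) ∨ Ω.IsTightHandcuff X ∨
    Ω.IsLooseHandcuff X ∨ Ω.IsContraTheta X

/-- The number of balanced components of the subgraph induced by `X`. -/
noncomputable def numBalComponents (Ω : BiasedGraph V E) (X : Set E) : ℕ :=
  {D | D ∈ Ω.toMultigraph.components X ∧ Ω.BalancedSub D}.ncard

end BiasedGraph

section MatroidDefs

variable {α : Type*}

/-- A circuit of a matroid: a minimal dependent set. -/
def MCircuit (M : Matroid α) (C : Set α) : Prop :=
  C ⊆ M.E ∧ ¬ M.Indep C ∧ ∀ D ⊂ C, M.Indep D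

/-- A hyperplane: a maximal proper flat. -/
def MHyperplane (M : Matroid α) (H : Set α) : Prop :=
  M.IsFlat H ∧ H ≠ M.E ∧ ∀ F, M.IsFlat F → H ⊆ F → F = H ∨ F = M.E

/-- A cocircuit: a circuit of the dual matroid. -/
def MCocircuit (M : Matroid α) (K : Set α) : Prop := MCircuit (Matroid.dual M) K

open scoped Matroid in
/-- Deletion of a set of elements. -/
def MDelete (M : Matroid α) (D : Set α) : Matroid α := M ↾ (M.E \ D)

/-- Contraction of a set of elements. -/
def MContract (M : Matroid α) (C : Set α) : Matroid α :=
  Matroid.dual (MDelete (Matroid.dual M) C)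

/-- `N` is a minor of `M`. -/
def IsMinorOf (N M : Matroid α) : Prop := ∃ C D, N = MDelete (MContract M C) D

/-- The rank of a set in a matroid (junk value if unbounded). -/
noncomputable def mRank (M : Matroid α) (X : Set α) : ℕ :=
  sSup {n : ℕ | ∃ I, M.Indep I ∧ I ⊆ X ∧ I.ncard = n}

/-- A matroid is connected if any two elements lie on a common circuit. -/
def MatroidConnected (M : Matroid α) : Prop :=
  M.E.Nonempty ∧ ∀ e ∈ M.E, ∀ f ∈ M.E, e = f ∨ ∃ C, MCircuit M C ∧ e ∈ C ∧ f ∈ C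

/-- A `k`-separation of a matroid. -/
def MatroidKSeparation (M : Matroid α) (X Y : Set α) (k : ℕ) : Prop :=
  X ∪ Y = M.E ∧ Disjoint X Y ∧ k ≤ X.ncard ∧ k ≤ Y.ncard ∧
    mRank M X + mRank M Y + 1 = mRank M M.E + k

/-- A matroid is 3-connected if it has no `k`-separation for `k < 3`. -/
def Matroid3Connected (M : Matroid α) : Prop :=
  ∀ X Y (k : ℕ), k ≤ 2 → ¬ MatroidKSeparation M X Y k

/-- A matroid is graphic if its circuits are exactly the cycles of some multigraph. -/
def IsGraphic (M : Matroid α) : Prop :=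
  ∃ (W : Type) (G : Multigraph W α), ∀ C, MCircuit M C ↔ G.IsCycleSet C

/-- A matroid has a `U_{2,4}` minor. -/
def HasU24Minor (M : Matroid α) : Prop :=
  ∃ N : Matroid α, IsMinorOf N M ∧ N.E.ncard = 4 ∧
    ∀ C, MCircuit N C ↔ C ⊆ N.E ∧ C.ncard = 3

end MatroidDefs

/-- `M` is the frame matroid of the biased graph `Ω` (on ground set all of `E`). -/
def IsFrameMatroidOf {V E : Type*} (M : Matroid E) (Ω : BiasedGraph V E) : Prop :=
  M.E = Set.univ ∧ ∀ C, MCircuit M C ↔ Ω.FrameCircuit C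

open scoped Matroid in
/-- A vertex is committed: the complement of its edge star is a connected
nongraphic hyperplane of the frame matroid. -/
def BiasedGraph.IsCommitted {V E : Type*} (Ω : BiasedGraph V E) (M : Matroid E) (x : V) : Prop :=
  MHyperplane M (Ω.toMultigraph.deltaPlus x)ᶜ ∧
    MatroidConnected (M ↾ (Ω.toMultigraph.deltaPlus x)ᶜ) ∧
    ¬ IsGraphic (M ↾ (Ω.toMultigraph.deltaPlus x)ᶜ)

/-- `Ω'` is a roll-up of `Ω` at the balancing vertex `u`: some (possibly empty)
unbalancing class of links at `u` is replaced by unbalanced loops at their other endpoints. -/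
def BiasedGraph.IsRollUpOf {V E : Type*} (Ω' Ω : BiasedGraph V E) (u : V) : Prop :=
  ∃ S : Set E, (S = ∅ ∨ Ω.IsUnbalancingClass u S) ∧
    (∀ e ∉ S, Ω'.inc e = Ω.inc e) ∧
    (∀ e ∈ S, ∃ w, w ≠ u ∧ Ω.inc e = s(u, w) ∧ Ω'.inc e = s(w, w)) ∧
    (∀ C, Ω'.Balanced C ↔ (Ω.Balanced C ∧ C ∩ S = ∅))


/-! If `P ≠ P'`, follow both paths from `u` to the last vertex `x` up to which they agree,
then follow `P'` onwards until it first returns to a vertex `y` of `P`. This piece `Q` of `P'`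
meets `P` only in `x` and `y`, so replacing the `x`-`y` subpath of `P` by `Q` is a rerouting.
The first edge of `P` after `x` is not in `P'` and disappears, while the edges of `Q` lie in
`P'`, so the number of edges of the current path outside `P'` strictly decreases. -/

namespace Multigraph

variable {V : Type u} {E : Type v} {G : Multigraph V E}

namespace Walk

def append : {x y z : V} → G.Walk x y → G.Walk y z → G.Walk x z
  | _, _, _, .nil _, w => w
  | _, _, _, .cons e h t, w => .cons e h (t.append w)

@[simp]
theorem edgeList_append {x y z : V} (W₁ : G.Walk x y) (W₂ : G.Walk y z) :
    (W₁.append W₂).edgeList = W₁.edgeList ++ W₂.edgeList := by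
  induction W₁ with
  | nil => rfl
  | cons e h t ih => simp [append, edgeList, ih]

theorem edgeSet_append {x y z : V} (W₁ : G.Walk x y) (W₂ : G.Walk y z) :
    (W₁.append W₂).edgeSet = W₁.edgeSet ∪ W₂.edgeSet := by
  ext f
  simp [edgeSet]

theorem finite_edgeSet {x y : V} (W : G.Walk x y) : W.edgeSet.Finite :=
  W.edgeList.finite_toSet

theorem start_mem_vertList {x y : V} (W : G.Walk x y) : x ∈ W.vertList := by
  cases W <;> simp [vertList]

theorem end_mem_vertList {x y : V} (W : G.Walk x y) : y ∈ W.vertList := by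
  induction W with
  | nil => simp [vertList]
  | cons e h t ih => exact List.mem_cons_of_mem _ ih

@[simp]
theorem mem_vertList_append {x y z : V} (W₁ : G.Walk x y) (W₂ : G.Walk y z) {a : V} :
    a ∈ (W₁.append W₂).vertList ↔ a ∈ W₁.vertList ∨ a ∈ W₂.vertList := by
  induction W₁ with
  | nil => simpa [append, vertList] using fun h : a = _ => h ▸ W₂.start_mem_vertList
  | cons e h t ih => simp [append, vertList, ih, or_assoc]

theorem mem_vertList_of_mem_inc {x y : V} (W : G.Walk x y) {f : E} {a : V}
    (hf : f ∈ W.edgeList) (ha : a ∈ G.inc f) : a ∈ W.vertList := by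
  induction W with
  | nil => simp [edgeList] at hf
  | cons e h t ih =>
    rcases List.mem_cons.mp hf with rfl | hf
    · rw [h, Sym2.mem_iff] at ha
      rcases ha with rfl | rfl
      · exact List.mem_cons_self
      · exact List.mem_cons_of_mem _ t.start_mem_vertList
    · exact List.mem_cons_of_mem _ (ih hf)

theorem isPath_cons {x y z : V} {e : E} {h : G.inc e = s(x, y)} {t : G.Walk y z} :
    (Walk.cons e h t).IsPath ↔ x ∉ t.vertList ∧ t.IsPath :=
  List.nodup_cons

theorem isPath_append_iff {x y z : V} {W₁ : G.Walk x y} {W₂ : G.Walk y z} :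
    (W₁.append W₂).IsPath ↔
      W₁.IsPath ∧ W₂.IsPath ∧ ∀ a ∈ W₁.vertList, a ∈ W₂.vertList → a = y := by
  induction W₁ with
  | nil => simp [append, IsPath, vertList]
  | cons e h t ih =>
    simp only [append, isPath_cons, mem_vertList_append, ih, vertList, List.forall_mem_cons,
      not_or]
    constructor
    · rintro ⟨⟨hxt, hxW₂⟩, ht, hW₂, hC⟩
      exact ⟨⟨hxt, ht⟩, hW₂, fun h => absurd h hxW₂, hC⟩
    · rintro ⟨⟨hxt, ht⟩, hW₂, hxy, hC⟩
      exact ⟨⟨hxt, fun h => hxt (hxy h ▸ t.end_mem_vertList)⟩, ht, hW₂, hC⟩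

theorem IsPath.not_mem_edgeList_tail {x y z : V} {e : E} {h : G.inc e = s(x, y)}
    {t : G.Walk y z} (hW : (Walk.cons e h t).IsPath) : e ∉ t.edgeList :=
  fun he => (isPath_cons.mp hW).1 (t.mem_vertList_of_mem_inc he (h ▸ Sym2.mem_mk_left _ _))

theorem IsPath.edgeList_nodup {x y : V} {W : G.Walk x y} (hW : W.IsPath) : W.edgeList.Nodup := by
  induction W with
  | nil => exact List.nodup_nil
  | cons e h t ih => exact List.nodup_cons.mpr ⟨hW.not_mem_edgeList_tail, ih (isPath_cons.mp hW).2⟩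

theorem exists_eq_append_of_mem_vertList {x z : V} (W : G.Walk x z) {y : V}
    (hy : y ∈ W.vertList) : ∃ (W₁ : G.Walk x y) (W₂ : G.Walk y z), W = W₁.append W₂ := by
  induction W with
  | nil a =>
    obtain rfl : y = a := List.mem_singleton.mp hy
    exact ⟨.nil _, .nil _, rfl⟩
  | cons e h t ih =>
    rcases List.mem_cons.mp hy with rfl | hy
    · exact ⟨.nil _, .cons e h t, rfl⟩
    · obtain ⟨t₁, t₂, rfl⟩ := ih hy
      exact ⟨.cons e h t₁, t₂, rfl⟩

theorem exists_eq_append_first_mem (S : Set V) {x z : V} (W : G.Walk x z) (hz : z ∈ S) :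
    ∃ (y : V) (W₁ : G.Walk x y) (W₂ : G.Walk y z), W = W₁.append W₂ ∧ y ∈ S ∧
      ∀ a ∈ W₁.vertList, a ∈ S → a = y := by
  induction W with
  | nil a => exact ⟨a, .nil a, .nil a, rfl, hz, by simp [vertList]⟩
  | cons e h t ih =>
    rename_i x' _ _
    by_cases hx' : x' ∈ S
    · exact ⟨x', .nil x', .cons e h t, rfl, hx', by simp [vertList]⟩
    · obtain ⟨y, W₁, W₂, rfl, hy, hW₁⟩ := ih hz
      refine ⟨y, .cons e h W₁, W₂, rfl, hy, fun a ha haS => ?_⟩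
      rcases List.mem_cons.mp ha with rfl | ha
      · exact absurd haS hx'
      · exact hW₁ a ha haS

theorem edgeSet_subset_append_append {u x y v : V} (W₁ : G.Walk u x) (W : G.Walk x y)
    (W₂ : G.Walk y v) : W.edgeSet ⊆ (W₁.append (W.append W₂)).edgeSet := by
  rw [edgeSet_append, edgeSet_append]
  exact Set.subset_union_left.trans Set.subset_union_right

theorem IsPath.of_append_append {u x y v : V} {W₁ : G.Walk u x} {W : G.Walk x y}
    {W₂ : G.Walk y v} (h : (W₁.append (W.append W₂)).IsPath) : W.IsPath :=
  (isPath_append_iff.mp (isPath_append_iff.mp h).2.1).1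

section Replace

variable {u x y v : V} {A₁ : G.Walk u x} {R Q : G.Walk x y} {A₂ : G.Walk y v}

theorem IsPath.append_replace (hA : (A₁.append (R.append A₂)).IsPath) (hQ : Q.IsPath)
    (hQA : ∀ z ∈ Q.vertList, z ∈ (A₁.append (R.append A₂)).vertList → z = x ∨ z = y) :
    (A₁.append (Q.append A₂)).IsPath := by
  obtain ⟨hA₁, hRA₂, hA₁RA₂⟩ := isPath_append_iff.mp hA
  obtain ⟨-, hA₂, hRA₂⟩ := isPath_append_iff.mp hRA₂
  have hQA₂ : ∀ a ∈ Q.vertList, a ∈ A₂.vertList → a = y := fun a ha ha₂ => by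
    rcases hQA a ha (by simp [ha₂]) with rfl | rfl
    · exact hRA₂ a R.start_mem_vertList ha₂
    · rfl
  refine isPath_append_iff.mpr ⟨hA₁, isPath_append_iff.mpr ⟨hQ, hA₂, hQA₂⟩, fun a ha₁ ha => ?_⟩
  rcases (mem_vertList_append _ _).mp ha with haQ | ha₂
  · rcases hQA a haQ (by simp [ha₁]) with rfl | rfl
    · rfl
    · exact hA₁RA₂ a ha₁ (by simp [R.end_mem_vertList])
  · exact hA₁RA₂ a ha₁ (by simp [ha₂])

theorem edgeSet_append_replace (hA : (A₁.append (R.append A₂)).IsPath) (Q : G.Walk x y) :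
    (A₁.append (Q.append A₂)).edgeSet =
      ((A₁.append (R.append A₂)).edgeSet \ R.edgeSet) ∪ Q.edgeSet := by
  have hnd := hA.edgeList_nodup
  simp only [edgeList_append, List.nodup_append, List.mem_append] at hnd
  ext f
  simp only [edgeSet, edgeList_append, Set.mem_union, Set.mem_sdiff, Set.mem_ofPred_eq,
    List.mem_append]
  constructor
  · rintro (h | h | h)
    · exact Or.inl ⟨Or.inl h, fun hR => hnd.2.2 f h f (Or.inl hR) rfl⟩
    · exact Or.inr h
    · exact Or.inl ⟨Or.inr (Or.inr h), fun hR => hnd.2.1.2.2 f hR f h rfl⟩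
  · rintro (⟨h | h | h, hR⟩ | h)
    · exact Or.inl h
    · exact absurd h hR
    · exact Or.inr (Or.inr h)
    · exact Or.inr (Or.inl h)

theorem rerouteStep_append_replace (hA : (A₁.append (R.append A₂)).IsPath) (hQ : Q.IsPath)
    (hQA : ∀ z ∈ Q.vertList, z ∈ (A₁.append (R.append A₂)).vertList → z = x ∨ z = y) :
    G.RerouteStep u v (A₁.append (R.append A₂)).edgeSet (A₁.append (Q.append A₂)).edgeSet := by
  have hW := hA.append_replace hQ hQA
  refine ⟨⟨_, hA, rfl⟩, ⟨_, hW, rfl⟩, x, y, R.edgeSet, Q.edgeSet, ⟨R, hA.of_append_append, rfl⟩,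
    ⟨Q, hQ, rfl⟩, edgeSet_subset_append_append A₁ R A₂, ?_, ?_, edgeSet_append_replace hA Q⟩
  · have hnd := hW.edgeList_nodup
    simp only [edgeList_append, List.nodup_append, List.mem_append] at hnd
    refine Set.disjoint_left.mpr fun f hfQ ⟨hfA, hfR⟩ => ?_
    simp only [edgeSet, edgeList_append, Set.mem_ofPred_eq, List.mem_append] at hfA hfQ hfR
    rcases hfA with h | h | h
    · exact hnd.2.2 f h f (Or.inl hfQ) rfl
    · exact hfR h
    · exact hnd.2.1.2.2 f hfQ f h rfl
  · rintro z ⟨⟨f, hf, hzf⟩, ⟨f', hf', hzf'⟩⟩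
    rcases hQA z (Q.mem_vertList_of_mem_inc hf hzf) (mem_vertList_of_mem_inc _ hf' hzf')
      with rfl | rfl <;> simp

end Replace

theorem exists_detour {w v : V} (A B : G.Walk w v) (hAp : A.IsPath) (hBp : B.IsPath)
    (hne : A.edgeList ≠ B.edgeList) :
    ∃ (x y : V) (A₁ : G.Walk w x) (R Q : G.Walk x y) (A₂ B₂ : G.Walk y v),
      A = A₁.append (R.append A₂) ∧ B = A₁.append (Q.append B₂) ∧
      (∃ g ∈ R.edgeList, g ∉ B.edgeList) ∧
      ∀ z ∈ Q.vertList, z ∈ A.vertList → z = x ∨ z = y := by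
  induction A with
  | nil =>
    cases B with
    | nil => exact absurd rfl hne
    | cons e h t => exact absurd t.end_mem_vertList (isPath_cons.mp hBp).1
  | cons e hA t ih =>
    rename_i w a v
    cases B with
    | nil => exact absurd t.end_mem_vertList (isPath_cons.mp hAp).1
    | cons e' hB tB =>
      obtain ⟨-, ht⟩ := isPath_cons.mp hAp
      obtain ⟨hwtB, htB⟩ := isPath_cons.mp hBp
      by_cases hee : e = e'
      · subst hee
        obtain rfl := Sym2.congr_right.mp (hA.symm.trans hB)
        obtain ⟨x, y, A₁, R, Q, A₂, B₂, rfl, rfl, ⟨g, hgR, hgB⟩, hQA⟩ :=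
          ih tB ht htB fun h => hne (by simp [edgeList, h])
        refine ⟨x, y, .cons e hA A₁, R, Q, A₂, B₂, rfl, rfl, ⟨g, hgR, ?_⟩, ?_⟩
        · have hgt : g ∈ (A₁.append (R.append A₂)).edgeList := by simp [hgR]
          simp only [edgeList, List.mem_cons, not_or]
          exact ⟨fun h => hAp.not_mem_edgeList_tail (h ▸ hgt), hgB⟩
        · intro z hzQ hzA
          rcases List.mem_cons.mp hzA with rfl | hz
          · exact absurd (by simp [hzQ]) hwtB
          · exact hQA z hzQ hz
      · -- The paths diverge at `w`: follow `B` until it first returns to a vertex of `A`.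
        obtain ⟨y, Q₀, B₂, rfl, hyA, hQ₀A⟩ := tB.exists_eq_append_first_mem
          {z | z ∈ (Walk.cons e hA t).vertList} (Walk.cons e hA t).end_mem_vertList
        obtain ⟨R, A₂, hRA₂⟩ := (Walk.cons e hA t).exists_eq_append_of_mem_vertList hyA
        have hyw : y ≠ w := by
          rintro rfl
          exact hwtB (by simp [Q₀.end_mem_vertList])
        refine ⟨w, y, .nil w, R, .cons e' hB Q₀, A₂, B₂, hRA₂, rfl, ⟨e, ?_, ?_⟩, ?_⟩
        · have he : e ∈ (R.append A₂).edgeList := hRA₂ ▸ List.mem_cons_self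
          rw [edgeList_append, List.mem_append] at he
          refine he.resolve_right fun heA₂ => hyw ?_
          have hwA₂ := A₂.mem_vertList_of_mem_inc heA₂ (hA ▸ Sym2.mem_mk_left _ _)
          exact ((isPath_append_iff.mp (hRA₂ ▸ hAp)).2.2 w R.start_mem_vertList hwA₂).symm
        · simp only [edgeList, List.mem_cons, not_or]
          exact ⟨hee, fun he => hwtB (mem_vertList_of_mem_inc _ he (hA ▸ Sym2.mem_mk_left _ _))⟩
        · intro z hzQ hzA
          rcases List.mem_cons.mp hzQ with rfl | hz
          · exact Or.inl rfl
          · exact Or.inr (hQ₀A z hz hzA)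

end Walk

open Walk

theorem exists_rerouteStep_sdiff_ssubset {u v : V} {A B : G.Walk u v} (hA : A.IsPath)
    (hB : B.IsPath) (hne : A.edgeSet ≠ B.edgeSet) :
    ∃ W : G.Walk u v, W.IsPath ∧ G.RerouteStep u v A.edgeSet W.edgeSet ∧
      W.edgeSet \ B.edgeSet ⊂ A.edgeSet \ B.edgeSet := by
  obtain ⟨x, y, A₁, R, Q, A₂, B₂, rfl, rfl, ⟨g, hgR, hgB⟩, hQA⟩ :=
    exists_detour A B hA hB fun h => hne (congrArg (fun l => {e | e ∈ l}) h)
  have hQ : Q.IsPath := hB.of_append_append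
  refine ⟨_, hA.append_replace hQ hQA, rerouteStep_append_replace hA hQ hQA, ?_⟩
  rw [edgeSet_append_replace hA Q]
  have hgA : g ∈ (A₁.append (R.append A₂)).edgeSet := edgeSet_subset_append_append A₁ R A₂ hgR
  have hQB := edgeSet_subset_append_append A₁ Q B₂
  refine (Set.ssubset_iff_of_subset ?_).mpr ⟨g, ⟨hgA, hgB⟩, fun hg => ?_⟩
  · rintro f ⟨hfA | hfQ, hfB⟩
    · exact ⟨hfA.1, hfB⟩
    · exact absurd (hQB hfQ) hfB
  · rcases hg.1 with hgAR | hgQ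
    · exact hgAR.2 hgR
    · exact hgB (hQB hgQ)

theorem reflTransGen_rerouteStep {u v : V} (A B : G.Walk u v) (hA : A.IsPath)
    (hB : B.IsPath) : Relation.ReflTransGen (G.RerouteStep u v) A.edgeSet B.edgeSet := by
  by_cases hAB : A.edgeSet = B.edgeSet
  · exact hAB ▸ .refl
  obtain ⟨W, hW, hstep, hlt⟩ := exists_rerouteStep_sdiff_ssubset hA hB hAB
  exact .head hstep (reflTransGen_rerouteStep W B hW hB)
termination_by (A.edgeSet \ B.edgeSet).ncard
decreasing_by exact Set.ncard_lt_ncard hlt A.finite_edgeSet.sdiff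

end Multigraph

/-- Any two `u`-`v` paths are related by a finite sequence of reroutings. -/
theorem stmt0 {V E : Type*} (G : Multigraph V E) (u v : V) (P P' : Set E)
    (hP : G.IsPathSet u v P) (hP' : G.IsPathSet u v P') :
    Relation.ReflTransGen (G.RerouteStep u v) P P' := by
  obtain ⟨A, hA, rfl⟩ := hP
  obtain ⟨B, hB, rfl⟩ := hP'
  exact Multigraph.reflTransGen_rerouteStep A B hA hB
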